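/- arXiv:1912.12435 — 8 statements merged into one kernel-verified Lean document; each statement's English description precedes it below -/
import Mathlib

section
/- For every infinite set $x$, there is an explicit surjection from $\mathrm{seq}^{1\text{-}1}(x)$ onto $\omega \times \mathrm{seq}^{1\text{-}1}(x)$, constructed without the axiom of choice. (Concretely: fix a bijection $p\colon \omega\times\omega \to \omega$ with $n \le p(m,n)$ for all $m,n$; map an injective sequence $t$ of length $p(m,n)$ to the pair $(m, t\restriction n)$.) -/
/-!
Since `Nat.pair m n ≥ n`, every injective sequence `l` can be prolonged by fresh elements of the
infinite type to an injective sequence `t` of length `Nat.pair m l.length`; then `t` is sent to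
`(m, l)` by the map reading `(m, n)` off the length of `t` through `Nat.unpair` and keeping the
first `n` entries of `t`.
-/

theorem List.Nodup.exists_nodup_prefix_length_eq {α : Type*} [Infinite α] {l : List α}
    (hl : l.Nodup) {n : ℕ} (hn : l.length ≤ n) : ∃ t : List α, t.Nodup ∧ t.length = n ∧ l <+: t := by
  classical
  induction n, hn using Nat.le_induction with
  | base => exact ⟨l, hl, rfl, List.prefix_refl l⟩
  | succ n _ ih =>
    obtain ⟨t, ht, rfl, hlt⟩ := ih
    obtain ⟨a, ha⟩ := Infinite.exists_notMem_finset t.toFinset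
    refine ⟨t.concat a, ht.concat (by simpa using ha), List.length_concat, ?_⟩
    exact hlt.trans (List.concat_eq_append ▸ List.prefix_append t [a])

def List.unpairTake {α : Type*} (t : {l : List α // l.Nodup}) : ℕ × {l : List α // l.Nodup} :=
  ((Nat.unpair t.1.length).1,
    ⟨t.1.take (Nat.unpair t.1.length).2, t.2.sublist (List.take_sublist _ _)⟩)

theorem List.unpairTake_surjective {α : Type*} [Infinite α] :
    Function.Surjective (List.unpairTake (α := α)) := by
  rintro ⟨m, l, hl⟩
  obtain ⟨t, ht, hlen, hlt⟩ := hl.exists_nodup_prefix_length_eq (Nat.right_le_pair m l.length)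
  refine ⟨⟨t, ht⟩, ?_⟩
  simp only [List.unpairTake, hlen, Nat.unpair_pair, (List.prefix_iff_eq_take.mp hlt).symm]

/-- For every infinite set `α`, there is a surjection from `seq¹⁻¹(α)` onto
`ω × seq¹⁻¹(α)`. -/
theorem stmt_3 (α : Type) [Infinite α] :
    ∃ f : {l : List α // l.Nodup} → ℕ × {l : List α // l.Nodup},
      Function.Surjective f :=
  ⟨List.unpairTake, List.unpairTake_surjective⟩
end

section
/- With $A$, $n$, $\vec{k} \le \vec{l}$, $F$, $G$ as above: $F$ is injective on the collection of sets $X \subseteq [A]^{k_1}\times\cdots\times[A]^{k_n}$ satisfying $G(X) = X$. That is, if $G(X)=X$, $G(Y)=Y$, and $F(X)=F(Y)$, then $X=Y$. -/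
variable {α : Type}

/-- `tuples k` is the set `[A]^{k₁} × ⋯ × [A]^{kₙ}` of tuples of finite
subsets with prescribed cardinalities. -/
def tuples (n : ℕ) (k : Fin n → ℕ) : Set (Fin n → Finset α) :=
  {x | ∀ i, (x i).card = k i}

/-- `F(X)`: tuples in `[A]^{l₁} × ⋯ × [A]^{lₙ}` extending (coordinatewise)
some member of `X`. -/
def Fop (n : ℕ) (l : Fin n → ℕ) (X : Set (Fin n → Finset α)) :
    Set (Fin n → Finset α) :=
  {y | y ∈ tuples n l ∧ ∃ x ∈ X, ∀ i, x i ⊆ y i}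

/-- `G(X)`: tuples in `[A]^{k₁} × ⋯ × [A]^{kₙ}` all of whose extensions in
`[A]^{l₁} × ⋯ × [A]^{lₙ}` lie in `F(X)`. -/
def Gop (n : ℕ) (k l : Fin n → ℕ) (X : Set (Fin n → Finset α)) :
    Set (Fin n → Finset α) :=
  {x | x ∈ tuples n k ∧
    ∀ y ∈ tuples (α := α) n l, (∀ i, x i ⊆ y i) → y ∈ Fop n l X}

/-- `H(X) = G(X) \ X`. -/
def Hop (n : ℕ) (k l : Fin n → ℕ) (X : Set (Fin n → Finset α)) :
    Set (Fin n → Finset α) :=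
  Gop n k l X \ X

theorem subset_Gop_of_Fop_subset {n : ℕ} {k l : Fin n → ℕ} {X Y : Set (Fin n → Finset α)}
    (hX : X ⊆ tuples n k) (hF : Fop n l X ⊆ Fop n l Y) : X ⊆ Gop n k l Y :=
  fun x hx => ⟨hX hx, fun _ hy hxy => hF ⟨hy, x, hx, hxy⟩⟩

theorem stmt_9_general (n : ℕ) (k l : Fin n → ℕ)
    (X Y : Set (Fin n → Finset α)) (hX : X ⊆ tuples n k) (hY : Y ⊆ tuples n k)
    (hGX : Gop n k l X = X) (hGY : Gop n k l Y = Y)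
    (hF : Fop n l X = Fop n l Y) : X = Y := by
  apply Set.Subset.antisymm
  · simpa only [hGY] using subset_Gop_of_Fop_subset hX hF.le
  · simpa only [hGX] using subset_Gop_of_Fop_subset hY hF.ge

/-- `F` is injective on the collection of `X ⊆ [A]^{k₁} × ⋯ × [A]^{kₙ}`
with `G(X) = X`. -/
theorem stmt_9 (n : ℕ) (hn : 1 ≤ n) (k l : Fin n → ℕ) (hkl : ∀ i, k i ≤ l i)
    (X Y : Set (Fin n → Finset α)) (hX : X ⊆ tuples n k) (hY : Y ⊆ tuples n k)
    (hGX : Gop n k l X = X) (hGY : Gop n k l Y = Y)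
    (hF : Fop n l X = Fop n l Y) : X = Y :=
  stmt_9_general n k l X Y hX hY hGX hGY hF
end

section
/- (Key Lemma) Let $A$ be an infinite set, $n \ge 1$, and $k_1,\dots,k_n \le l_1,\dots,l_n$ natural numbers coordinatewise. With $H(X) = G(X) \setminus X$ as defined via the operators $F, G$ on subsets of $[A]^{k_1}\times\cdots\times[A]^{k_n}$: for every $X \subseteq [A]^{k_1}\times\cdots\times[A]^{k_n}$, the $(k_1+\cdots+k_n+1)$-fold iterate of $H$ applied to $X$ is empty: $H^{(k_1+\cdots+k_n+1)}(X) = \varnothing$. -/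
private theorem finRamsey {κ : Type} [Finite κ] :
    ∀ (R : ℕ) (c : (Fin R → ℕ) → κ) (A : Set ℕ), A.Infinite →
    ∃ M, M ⊆ A ∧ M.Infinite ∧ ∃ k0, ∀ f : Fin R → ℕ,
      StrictMono f → (∀ p, f p ∈ M) → c f = k0 := by
  intro R
  induction R with
  | zero =>
    intro c A hA
    refine ⟨A, subset_rfl, hA, c (fun _ => 0), fun f _ _ => ?_⟩
    congr 1
    funext p
    exact absurd p.2 (Nat.not_lt_zero _)
  | succ r IH =>
    intro c A hA
    classical
    -- the one-step refinement
    have step : ∀ B : Set ℕ, B.Infinite →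
        ∃ B' : Set ℕ, B' ⊆ B ∧ B'.Infinite ∧ (∀ x ∈ B', sInf B < x) ∧
          ∃ k0, ∀ f : Fin r → ℕ, StrictMono f → (∀ p, f p ∈ B') →
            c (Fin.cons (sInf B) f) = k0 := by
      intro B hB
      have hfin : {x : ℕ | x ≤ sInf B}.Finite := Set.finite_le_nat _
      have hinf : (B \ {x : ℕ | x ≤ sInf B}).Infinite := hB.diff hfin
      obtain ⟨M, hMsub, hMinf, k0, hk0⟩ := IH (fun f => c (Fin.cons (sInf B) f))
        (B \ {x : ℕ | x ≤ sInf B}) hinf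
      refine ⟨M, fun x hx => (hMsub hx).1, hMinf, fun x hx => ?_, k0, hk0⟩
      have := (hMsub hx).2
      simp only [Set.mem_setOf_eq, not_le] at this
      exact this
    choose F hFsub hFinf hFgt kf hkf using step
    let G : {B : Set ℕ // B.Infinite} → {B : Set ℕ // B.Infinite} :=
      fun B => ⟨F B.1 B.2, hFinf B.1 B.2⟩
    let A' : ℕ → {B : Set ℕ // B.Infinite} := fun t => G^[t] ⟨A, hA⟩
    have hA'succ : ∀ t, A' (t+1) = G (A' t) := by
      intro t
      simp only [A', Function.iterate_succ_apply']
    let a : ℕ → ℕ := fun t => sInf (A' t).1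
    have haMem : ∀ t, a t ∈ (A' t).1 := fun t => Nat.sInf_mem (A' t).2.nonempty
    have hchain : ∀ t t', t ≤ t' → (A' t').1 ⊆ (A' t).1 := by
      intro t t' h
      induction t' with
      | zero => cases Nat.le_zero.1 h; exact subset_rfl
      | succ u IH2 =>
        rcases Nat.lt_or_ge t (u+1) with h' | h'
        · have h1 : (A' (u+1)).1 ⊆ (A' u).1 := by
            rw [hA'succ]
            exact hFsub _ _
          exact (h1.trans (IH2 (Nat.lt_succ_iff.1 h')))
        · have : t = u + 1 := le_antisymm h h'
          subst this; exact subset_rfl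
    have hgt : ∀ t t', t < t' → a t < a t' := by
      intro t t' h
      have h1 : (A' t').1 ⊆ (A' (t+1)).1 := hchain _ _ h
      have h2 := h1 (haMem t')
      rw [hA'succ] at h2
      exact hFgt _ _ _ h2
    obtain ⟨k0, hfib⟩ := Finite.exists_infinite_fiber (fun t => kf (A' t).1 (A' t).2)
    have hfibinf : ((fun t => kf (A' t).1 (A' t).2) ⁻¹' {k0}).Infinite :=
      Set.infinite_coe_iff.1 hfib
    refine ⟨a '' ((fun t => kf (A' t).1 (A' t).2) ⁻¹' {k0}), ?_, ?_, k0, ?_⟩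
    · rintro x ⟨t, _, rfl⟩
      exact hchain 0 t (Nat.zero_le _) (haMem t)
    · exact hfibinf.image (Set.injOn_of_injective (fun x y hxy => by
        by_contra hne
        rcases Nat.lt_or_ge x y with h | h
        · exact absurd hxy (Nat.ne_of_lt (hgt _ _ h))
        · have : y < x := lt_of_le_of_ne h (Ne.symm hne)
          exact absurd hxy.symm (Nat.ne_of_lt (hgt _ _ this))))
    · intro f hf hfM
      obtain ⟨t, ht, h0⟩ := hfM 0
      have htail : ∀ p : Fin r, Fin.tail f p ∈ F (A' t).1 (A' t).2 := by
        intro p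
        obtain ⟨t', ht', h1⟩ := hfM p.succ
        have hlt : f 0 < f p.succ := hf (Fin.succ_pos p)
        rw [← h0, ← h1] at hlt
        have htt : t < t' := by
          rcases lt_trichotomy t t' with h2 | h2 | h2
          · exact h2
          · subst h2; exact absurd hlt (lt_irrefl _)
          · exact absurd hlt (not_lt.2 (le_of_lt (hgt _ _ h2)))
        have h3 : (A' t').1 ⊆ (A' (t+1)).1 := hchain _ _ htt
        have h4 : f p.succ ∈ (A' (t+1)).1 := by
          rw [← h1]; exact h3 (haMem t')
        rw [hA'succ] at h4
        exact h4
      have htailSM : StrictMono (Fin.tail f) := by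
        intro p q hpq
        exact hf (Fin.succ_lt_succ_iff.mpr hpq)
      have hkfEq := hkf (A' t).1 (A' t).2 (Fin.tail f) htailSM htail
      have hcons : Fin.cons (f 0) (Fin.tail f) = f := Fin.cons_self_tail f
      have hcf : c f = kf (A' t).1 (A' t).2 := by
        rw [← hcons, ← h0]
        exact hkfEq
      rw [hcf]
      simpa using ht

private theorem ramseyFun {κ : Type} [Finite κ] (R : ℕ) (c : (ℕ → ℕ) → κ)
    (hc : ∀ ⦃Φ Φ' : ℕ → ℕ⦄, (∀ p, p < R → Φ p = Φ' p) → c Φ = c Φ') :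
    ∃ M : Set ℕ, M.Infinite ∧ ∃ k0, ∀ Φ : ℕ → ℕ, StrictMono Φ →
      (∀ p, p < R → Φ p ∈ M) → c Φ = k0 := by
  classical
  obtain ⟨M, _, hMinf, k0, hk0⟩ := finRamsey R
    (fun f => c (fun p => if h : p < R then f ⟨p, h⟩ else 0)) Set.univ Set.infinite_univ
  refine ⟨M, hMinf, k0, fun Φ hΦ hΦM => ?_⟩
  have h1 : c Φ = c (fun p => if h : p < R then Φ p else 0) := by
    apply hc
    intro p hp
    simp [hp]
  rw [h1]
  exact hk0 (fun p : Fin R => Φ p) (fun p q hpq => hΦ hpq) (fun p => hΦM p p.2)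

private lemma interp (Q : Finset ℕ) (ψ : ℕ → ℕ)
    (h1 : ∀ q ∈ Q, q ≤ ψ q)
    (h2 : ∀ q ∈ Q, ∀ q' ∈ Q, q < q' → ψ q + (q' - q) ≤ ψ q') :
    ∃ ξ : ℕ → ℕ, StrictMono ξ ∧ ∀ q ∈ Q, ξ q = ψ q := by
  classical
  set B := Q.sup ψ + 1 with hB
  refine ⟨fun p => if h : (Q.filter (fun q => p ≤ q)).Nonempty
      then ψ ((Q.filter (fun q => p ≤ q)).min' h) - ((Q.filter (fun q => p ≤ q)).min' h - p)
      else p + B, ?_, ?_⟩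
  · intro p p' hpp'
    by_cases h' : (Q.filter (fun q => p' ≤ q)).Nonempty
    · have h'' : (Q.filter (fun q => p ≤ q)).Nonempty := by
        obtain ⟨q, hq⟩ := h'
        exact ⟨q, Finset.mem_filter.2 ⟨(Finset.mem_filter.1 hq).1,
          le_trans (le_of_lt hpp') (Finset.mem_filter.1 hq).2⟩⟩
      simp only [dif_pos h', dif_pos h'']
      set q0 := (Q.filter (fun q => p ≤ q)).min' h'' with hq0
      set q1 := (Q.filter (fun q => p' ≤ q)).min' h' with hq1
      have hq0mem := Finset.mem_filter.1 ((Q.filter (fun q => p ≤ q)).min'_mem h'')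
      have hq1mem := Finset.mem_filter.1 ((Q.filter (fun q => p' ≤ q)).min'_mem h')
      have hq0Q : q0 ∈ Q := hq0mem.1
      have hq1Q : q1 ∈ Q := hq1mem.1
      have hpq0 : p ≤ q0 := hq0mem.2
      have hpq1 : p' ≤ q1 := hq1mem.2
      have hq01 : q0 ≤ q1 := Finset.min'_le _ _ (Finset.mem_filter.2
        ⟨hq1Q, le_trans (le_of_lt hpp') hpq1⟩)
      rcases le_or_gt p' q0 with hc | hc
      · have : q1 ≤ q0 := Finset.min'_le _ _ (Finset.mem_filter.2 ⟨hq0Q, hc⟩)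
        have heq : q1 = q0 := le_antisymm this hq01
        have hψ := h1 q0 hq0Q
        rw [heq]
        omega
      · have hlt01 : q0 < q1 := lt_of_lt_of_le hc hpq1
        have hh2 := h2 q0 hq0Q q1 hq1Q hlt01
        have hψ := h1 q0 hq0Q
        omega
    · by_cases h'' : (Q.filter (fun q => p ≤ q)).Nonempty
      · simp only [dif_neg h', dif_pos h'']
        set q0 := (Q.filter (fun q => p ≤ q)).min' h'' with hq0
        have hq0mem := Finset.mem_filter.1 ((Q.filter (fun q => p ≤ q)).min'_mem h'')
        have hsup : ψ q0 ≤ Q.sup ψ := Finset.le_sup hq0mem.1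
        omega
      · simp only [dif_neg h', dif_neg h'']
        omega
  · intro q hq
    have hne : (Q.filter (fun q' => q ≤ q')).Nonempty :=
      ⟨q, Finset.mem_filter.2 ⟨hq, le_rfl⟩⟩
    simp only [dif_pos hne]
    have hmem := Finset.mem_filter.1 ((Q.filter (fun q' => q ≤ q')).min'_mem hne)
    have h1' : q ≤ (Q.filter (fun q' => q ≤ q')).min' hne := hmem.2
    have h2' : (Q.filter (fun q' => q ≤ q')).min' hne ≤ q :=
      Finset.min'_le _ _ (Finset.mem_filter.2 ⟨hq, le_rfl⟩)
    have : (Q.filter (fun q' => q ≤ q')).min' hne = q := le_antisymm h2' h1'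
    rw [this]
    omega

private def off {n : ℕ} (c : Fin n → ℕ) (i : Fin n) : ℕ :=
  ∑ i' ∈ Finset.univ.filter (fun i' => i' < i), c i'

private lemma sum_filter_le_eq {n : ℕ} (c : Fin n → ℕ) (i : Fin n) :
    off c i + c i = ∑ i' ∈ Finset.univ.filter (fun i' => i' ≤ i), c i' := by
  classical
  have h : Finset.univ.filter (fun i' => i' ≤ i)
      = insert i (Finset.univ.filter (fun i' => i' < i)) := by
    ext x
    simp only [Finset.mem_filter, Finset.mem_univ, true_and, Finset.mem_insert]
    constructor
    · intro hx
      rcases lt_or_eq_of_le hx with h | h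
      · exact Or.inr h
      · exact Or.inl h
    · rintro (rfl | hx)
      · exact le_rfl
      · exact le_of_lt hx
  rw [h, Finset.sum_insert (by simp)]
  rw [off]
  omega

private lemma off_add_le {n : ℕ} (c : Fin n → ℕ) (i : Fin n) :
    off c i + c i ≤ ∑ i', c i' := by
  classical
  rw [sum_filter_le_eq]
  exact Finset.sum_le_sum_of_subset (Finset.filter_subset _ _)

private lemma off_succ_le {n : ℕ} (c : Fin n → ℕ) {i i' : Fin n} (h : i < i') :
    off c i + c i ≤ off c i' := by
  classical
  rw [sum_filter_le_eq, off]
  apply Finset.sum_le_sum_of_subset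
  intro x hx
  simp only [Finset.mem_filter, Finset.mem_univ, true_and] at hx ⊢
  exact lt_of_le_of_lt hx h

private lemma off_mono_le {n : ℕ} (c : Fin n → ℕ) {i i' : Fin n} (h : i < i') :
    ∀ t t', t < c i → t' < c i' → off c i + t < off c i' + t' := by
  intro t t' ht ht'
  have := off_succ_le c h
  omega



variable {α : Type}

private def Blk {n : ℕ} (v : Fin n → Finset ℕ) : Prop :=
  ∀ ⦃i i' : Fin n⦄, i < i' → ∀ a ∈ v i, ∀ b ∈ v i', a < b

private def PP [DecidableEq α] (n : ℕ) (k l : Fin n → ℕ) (X : Set (Fin n → Finset α)) (j : ℕ)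
    (C : Fin n → Finset α) (c : Fin n → ℕ) (g : ℕ → α) : Prop :=
  ∀ v : Fin n → Finset ℕ, (∀ i, (v i).card = c i) → Blk v →
    (fun i => C i ∪ (v i).image g) ∈ (Hop n k l)^[j] X

private lemma iter_sub {n : ℕ} {k l : Fin n → ℕ} {X : Set (Fin n → Finset α)}
    (hX : X ⊆ tuples n k) : ∀ j, (Hop n k l)^[j] X ⊆ tuples n k := by
  intro j
  cases j with
  | zero => exact hX
  | succ j =>
    rw [Function.iterate_succ_apply']
    intro x hx
    exact hx.1.1

private lemma step [DecidableEq α] {n : ℕ} {k l : Fin n → ℕ} (hkl : ∀ i, k i ≤ l i)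
    {X : Set (Fin n → Finset α)} (hX : X ⊆ tuples n k) {j : ℕ}
    {C : Fin n → Finset α} {c : Fin n → ℕ} {g : ℕ → α}
    (hg : Function.Injective g) (hfresh : ∀ t i, g t ∉ C i)
    (hck : ∀ i, (C i).card + c i = k i)
    (hP : PP n k l X (j+1) C c g) :
    ∃ (C' : Fin n → Finset α) (c' : Fin n → ℕ) (g' : ℕ → α),
      Function.Injective g' ∧ (∀ t i, g' t ∉ C' i) ∧
      (∀ i, (C' i).card + c' i = k i) ∧
      (∑ i, (C' i).card) < (∑ i, (C i).card) ∧
      PP n k l X j C' c' g' := by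
  classical
  set e : Fin n → ℕ := fun i => c i + (l i - k i) with he
  have hCe : ∀ i, (C i).card + e i = l i := by
    intro i; have h1 := hck i; have h2 := hkl i; simp only [he]; omega
  set R : ℕ := ∑ i, e i with hR
  have hoffR : ∀ (i : Fin n), ∀ t, t < e i → off e i + t < R := by
    intro i t ht; have := off_add_le e i; omega
  set ublk : (ℕ → ℕ) → Fin n → Finset ℕ :=
    fun Φ i => (Finset.range (e i)).image (fun t => Φ (off e i + t)) with hublk
  set Yf : (ℕ → ℕ) → (Fin n → Finset α) :=
    fun Φ i => C i ∪ (ublk Φ i).image g with hYf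
  have hublk_card : ∀ (Φ : ℕ → ℕ), StrictMono Φ → ∀ i, (ublk Φ i).card = e i := by
    intro Φ hΦ i
    simp only [hublk]
    rw [Finset.card_image_of_injOn, Finset.card_range]
    intro t ht t' ht' hh
    have := hΦ.injective hh
    omega
  have hublk_mem : ∀ (Φ : ℕ → ℕ) i a, a ∈ ublk Φ i ↔ ∃ t, t < e i ∧ Φ (off e i + t) = a := by
    intro Φ i a; simp [hublk, Finset.mem_image]
  have hY_tuples : ∀ (Φ : ℕ → ℕ), StrictMono Φ → Yf Φ ∈ tuples n l := by
    intro Φ hΦ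
    intro i
    show (C i ∪ (ublk Φ i).image g).card = l i
    rw [Finset.card_union_of_disjoint, Finset.card_image_of_injective _ hg,
      hublk_card Φ hΦ]
    · exact hCe i
    · rw [Finset.disjoint_right]
      intro a ha
      obtain ⟨b, _, rfl⟩ := Finset.mem_image.1 ha
      exact hfresh b i
  have wex : ∀ Φ : ℕ → ℕ, StrictMono Φ →
      ∃ w, w ∈ (Hop n k l)^[j] X ∧ ∀ i, w i ⊆ Yf Φ i := by
    intro Φ hΦ
    have hck2 : ∀ i, c i ≤ (ublk Φ i).card := by
      intro i; rw [hublk_card Φ hΦ]; simp [he]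
    choose v hv hvcard using fun i => Finset.exists_subset_card_eq (hck2 i)
    have hvblk : Blk v := by
      intro i i' hii' a ha b hb
      obtain ⟨t, ht, hta⟩ := (hublk_mem Φ i a).1 (hv i ha)
      obtain ⟨t', ht', htb⟩ := (hublk_mem Φ i' b).1 (hv i' hb)
      subst hta; subst htb
      apply hΦ
      have := off_succ_le e hii'
      omega
    have hx1 := hP v hvcard hvblk
    have hx1G : (fun i => C i ∪ (v i).image g) ∈ Gop n k l ((Hop n k l)^[j] X) := by
      rw [Function.iterate_succ_apply'] at hx1
      exact hx1.1
    have hsub : ∀ i, (C i ∪ (v i).image g) ⊆ Yf Φ i := by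
      intro i
      exact Finset.union_subset_union subset_rfl (Finset.image_subset_image (hv i))
    have hyF := hx1G.2 (Yf Φ) (hY_tuples Φ hΦ) hsub
    exact hyF.2
  set W : (Fin n → Finset α) → (Fin n → Finset α) := fun Y =>
    if h : ∃ w, w ∈ (Hop n k l)^[j] X ∧ ∀ i, w i ⊆ Y i then h.choose else (fun _ => ∅)
    with hW
  have Wspec : ∀ Φ : ℕ → ℕ, StrictMono Φ →
      W (Yf Φ) ∈ (Hop n k l)^[j] X ∧ ∀ i, W (Yf Φ) i ⊆ Yf Φ i := by
    intro Φ hΦ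
    have h := wex Φ hΦ
    simp only [hW, dif_pos h]
    exact h.choose_spec
  set Pfun : (ℕ → ℕ) → Fin n → Finset ℕ := fun Φ i =>
    (Finset.range R).filter
      (fun p => off e i ≤ p ∧ p < off e i + e i ∧ g (Φ p) ∈ W (Yf Φ) i) with hPfun
  set colorFn : (ℕ → ℕ) →
      (∀ i : Fin n, (↥((C i).powerset) × ↥((Finset.range R).powerset))) :=
    fun Φ i => (⟨W (Yf Φ) i ∩ C i, Finset.mem_powerset.2 Finset.inter_subset_right⟩,
                ⟨Pfun Φ i, Finset.mem_powerset.2 (Finset.filter_subset _ _)⟩) with hcolor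
  have hYagree : ∀ (Φ Φ' : ℕ → ℕ), (∀ p, p < R → Φ p = Φ' p) → Yf Φ = Yf Φ' := by
    intro Φ Φ' h
    funext i
    simp only [hYf]
    congr 2
    apply Finset.image_congr
    intro t ht
    have ht' : t < e i := by simpa using ht
    exact h _ (hoffR i t ht')
  have hcolor_dep : ∀ ⦃Φ Φ' : ℕ → ℕ⦄, (∀ p, p < R → Φ p = Φ' p) →
      colorFn Φ = colorFn Φ' := by
    intro Φ Φ' h
    have hYY := hYagree Φ Φ' h
    funext i
    simp only [hcolor, hPfun, hYY]
    congr 2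
    apply Finset.filter_congr
    intro p hp
    rw [h p (Finset.mem_range.1 hp)]
  obtain ⟨M, hMinf, k0, hk0⟩ := ramseyFun R colorFn hcolor_dep
  set E : ℕ → ℕ := Nat.nth (· ∈ M) with hE
  have hMinf' : {x | x ∈ M}.Infinite := hMinf
  have hESM : StrictMono E := Nat.nth_strictMono hMinf'
  have hEM : ∀ p, E p ∈ M := fun p => Nat.nth_mem_of_infinite hMinf' p
  set T : Fin n → Finset α := fun i => ((k0 i).1 : Finset α) with hT
  set Pos : Fin n → Finset ℕ := fun i => ((k0 i).2 : Finset ℕ) with hPos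
  have hTsub : ∀ i, T i ⊆ C i := fun i => Finset.mem_powerset.1 (k0 i).1.2
  have hPosR : ∀ i, Pos i ⊆ Finset.range R := fun i => Finset.mem_powerset.1 (k0 i).2.2
  have hkey : ∀ Φ : ℕ → ℕ, StrictMono Φ → (∀ p, p < R → Φ p ∈ M) →
      (∀ i, W (Yf Φ) i ∩ C i = T i) ∧ (∀ i, Pfun Φ i = Pos i) := by
    intro Φ hΦ hΦM
    have h := hk0 Φ hΦ hΦM
    constructor
    · intro i
      have h2 := congrFun h i
      exact congrArg (fun z => (z.1 : Finset α)) h2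
    · intro i
      have h2 := congrFun h i
      exact congrArg (fun z => (z.2 : Finset ℕ)) h2
  have hwEq : ∀ Φ : ℕ → ℕ, StrictMono Φ → (∀ p, p < R → Φ p ∈ M) →
      W (Yf Φ) = fun i => T i ∪ (Pos i).image (fun p => g (Φ p)) := by
    intro Φ hΦ hΦM
    obtain ⟨hT1, hP1⟩ := hkey Φ hΦ hΦM
    funext i
    apply Finset.ext
    intro a
    constructor
    · intro ha
      have hsub := (Wspec Φ hΦ).2 i ha
      rcases Finset.mem_union.1 hsub with hC | hgpart
      · exact Finset.mem_union.2 (Or.inl (by rw [← hT1 i]; exact Finset.mem_inter.2 ⟨ha, hC⟩))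
      · obtain ⟨b, hb, rfl⟩ := Finset.mem_image.1 hgpart
        obtain ⟨t, ht, htb⟩ := (hublk_mem Φ i b).1 hb
        subst htb
        refine Finset.mem_union.2 (Or.inr ?_)
        apply Finset.mem_image.2
        refine ⟨off e i + t, ?_, rfl⟩
        rw [← hP1 i]
        simp only [hPfun, Finset.mem_filter, Finset.mem_range]
        exact ⟨hoffR i t ht, Nat.le_add_right _ _, by omega, ha⟩
    · intro ha
      rcases Finset.mem_union.1 ha with hT' | hgpart
      · have h3 : a ∈ W (Yf Φ) i ∩ C i := by rw [hT1 i]; exact hT'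
        exact (Finset.mem_inter.1 h3).1
      · obtain ⟨p, hp, rfl⟩ := Finset.mem_image.1 hgpart
        have hp' : p ∈ Pfun Φ i := by rw [hP1 i]; exact hp
        simp only [hPfun, Finset.mem_filter] at hp'
        exact hp'.2.2.2
  have hwE := hwEq E hESM (fun p _ => hEM p)
  have hwXE : W (Yf E) ∈ (Hop n k l)^[j] X := (Wspec E hESM).1
  have hwtup : W (Yf E) ∈ tuples n k := iter_sub hX j hwXE
  have hTP : ∀ i, (T i).card + (Pos i).card = k i := by
    intro i
    have h1 : (W (Yf E) i).card = k i := hwtup i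
    rw [hwE] at h1
    simp only at h1
    rw [Finset.card_union_of_disjoint, Finset.card_image_of_injOn] at h1
    · exact h1
    · intro p hp p' hp' hpp
      exact hESM.injective (hg hpp)
    · rw [Finset.disjoint_right]
      intro a ha
      obtain ⟨p, _, rfl⟩ := Finset.mem_image.1 ha
      intro hmem
      exact hfresh (E p) i (hTsub i hmem)
  have hPosChar := (hkey E hESM (fun p _ => hEM p)).2
  have hPosIv : ∀ i, ∀ p ∈ Pos i, off e i ≤ p ∧ p < off e i + e i := by
    intro i p hp
    rw [← hPosChar i] at hp
    simp only [hPfun, Finset.mem_filter] at hp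
    exact ⟨hp.2.1, hp.2.2.1⟩
  have hPosDisj : ∀ (i i' : Fin n), i ≠ i' → ∀ p ∈ Pos i, p ∉ Pos i' := by
    intro i i' hne p hp hp'
    have h1 := hPosIv i p hp
    have h2 := hPosIv i' p hp'
    rcases lt_or_gt_of_ne hne with h | h
    · have := off_succ_le e h; omega
    · have := off_succ_le e h; omega
  have hsumlt : ∑ i, (T i).card < ∑ i, (C i).card := by
    by_contra hge
    push_neg at hge
    have hle : ∀ i, (T i).card ≤ (C i).card := fun i => Finset.card_le_card (hTsub i)
    have hall : ∀ i, (C i).card ≤ (T i).card := by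
      intro i
      by_contra hlt'
      push_neg at hlt'
      have hs : ∑ i, (T i).card < ∑ i, (C i).card :=
        Finset.sum_lt_sum (fun i _ => hle i) ⟨i, Finset.mem_univ i, hlt'⟩
      omega
    have hTC : ∀ i, T i = C i := fun i =>
      Finset.eq_of_subset_of_card_le (hTsub i) (hall i)
    set v : Fin n → Finset ℕ := fun i => (Pos i).image E with hv
    have hvcard : ∀ i, (v i).card = c i := by
      intro i
      simp only [hv]
      rw [Finset.card_image_of_injective _ hESM.injective]
      have h4 := hTP i
      have h5 := hck i
      have h6 : (T i).card = (C i).card := by rw [hTC i]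
      omega
    have hvblk : Blk v := by
      intro i i' hii' a ha b hb
      obtain ⟨p, hp, rfl⟩ := Finset.mem_image.1 ha
      obtain ⟨p', hp', rfl⟩ := Finset.mem_image.1 hb
      apply hESM
      have h1 := hPosIv i p hp
      have h2 := hPosIv i' p' hp'
      have := off_succ_le e hii'
      omega
    have hx2 := hP v hvcard hvblk
    have hfun : (fun i => C i ∪ (v i).image g) = W (Yf E) := by
      funext i
      rw [hwE]
      simp only [hv]
      rw [Finset.image_image, hTC i]
      rfl
    rw [hfun] at hx2
    rw [Function.iterate_succ_apply'] at hx2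
    exact hx2.2 hwXE
  set ρ : ℕ → ℕ := fun z => z * (R+1) + R with hρ
  have hρSM : StrictMono ρ := by
    intro z z' h
    simp only [hρ]
    exact Nat.add_lt_add_right (mul_lt_mul_of_pos_right h (Nat.succ_pos R)) R
  set g' : ℕ → α := fun z => g (E (ρ z)) with hg'
  have hg'inj : Function.Injective g' := fun z z' hzz =>
    hρSM.injective (hESM.injective (hg hzz))
  have hg'fresh : ∀ t i, g' t ∉ T i := fun t i hmem => hfresh _ i (hTsub i hmem)
  refine ⟨T, fun i => (Pos i).card, g', hg'inj, hg'fresh, hTP, hsumlt, ?_⟩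
  intro v' hv'card hv'blk
  set tgt : Fin n → Finset ℕ := fun i => (v' i).image ρ with htgt
  have htgtcard : ∀ i, (tgt i).card = (Pos i).card := by
    intro i
    simp only [htgt]
    rw [Finset.card_image_of_injective _ hρSM.injective, hv'card i]
  set ψ1 : Fin n → ℕ → ℕ := fun i q =>
    if hq : q ∈ Pos i then
      ((tgt i).orderEmbOfFin (htgtcard i) (((Pos i).orderIsoOfFin rfl).symm ⟨q, hq⟩))
    else 0 with hψ1
  set ψ : ℕ → ℕ := fun q => ∑ i, ψ1 i q with hψ
  have hψval : ∀ i, ∀ q ∈ Pos i, ψ q = ψ1 i q := by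
    intro i q hq
    simp only [hψ]
    apply Finset.sum_eq_single_of_mem i (Finset.mem_univ i)
    intro i' _ hne
    simp only [hψ1]
    rw [dif_neg (hPosDisj i i' hne.symm q hq)]
  have hψmem : ∀ i, ∀ q ∈ Pos i, ψ q ∈ tgt i := by
    intro i q hq
    rw [hψval i q hq]
    simp only [hψ1]
    rw [dif_pos hq]
    exact Finset.orderEmbOfFin_mem _ _ _
  have hψmono : ∀ (i i' : Fin n), ∀ q ∈ Pos i, ∀ q' ∈ Pos i', q < q' → ψ q < ψ q' := by
    intro i i' q hq q' hq' hqq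
    by_cases hii : i = i'
    · subst hii
      rw [hψval i q hq, hψval i q' hq']
      simp only [hψ1]
      rw [dif_pos hq, dif_pos hq']
      apply (Finset.orderEmbOfFin _ _).strictMono
      apply ((Pos i).orderIsoOfFin rfl).symm.strictMono
      exact Subtype.mk_lt_mk.2 hqq
    · have hii' : i < i' := by
        rcases lt_or_gt_of_ne hii with h | h
        · exact h
        · exfalso
          have h1 := hPosIv i q hq
          have h2 := hPosIv i' q' hq'
          have := off_succ_le e h
          omega
      obtain ⟨z, hz, hzq⟩ := Finset.mem_image.1 (hψmem i q hq)
      obtain ⟨z', hz', hzq'⟩ := Finset.mem_image.1 (hψmem i' q' hq')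
      rw [← hzq, ← hzq']
      exact hρSM (hv'blk hii' z hz z' hz')
  set Q : Finset ℕ := Finset.univ.biUnion Pos with hQ
  have hQmem : ∀ q, (∃ i, q ∈ Pos i) → q ∈ Q := by
    intro q ⟨i, hi⟩
    simp only [hQ, Finset.mem_biUnion]
    exact ⟨i, Finset.mem_univ i, hi⟩
  have hQmem' : ∀ q ∈ Q, ∃ i, q ∈ Pos i := by
    intro q hq
    simp only [hQ, Finset.mem_biUnion] at hq
    obtain ⟨i, _, hi⟩ := hq
    exact ⟨i, hi⟩
  have hinterp1 : ∀ q ∈ Q, q ≤ ψ q := by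
    intro q hqQ
    obtain ⟨i, hq⟩ := hQmem' q hqQ
    obtain ⟨z, hz, hzq⟩ := Finset.mem_image.1 (hψmem i q hq)
    have hqR : q < R := Finset.mem_range.1 (hPosR i hq)
    rw [← hzq]
    simp only [hρ]
    omega
  have hinterp2 : ∀ q ∈ Q, ∀ q' ∈ Q, q < q' → ψ q + (q' - q) ≤ ψ q' := by
    intro q hqQ q' hqQ' hqq
    obtain ⟨i, hq⟩ := hQmem' q hqQ
    obtain ⟨i', hq'⟩ := hQmem' q' hqQ'
    obtain ⟨z, hz, hzq⟩ := Finset.mem_image.1 (hψmem i q hq)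
    obtain ⟨z', hz', hzq'⟩ := Finset.mem_image.1 (hψmem i' q' hq')
    have hψlt : ψ q < ψ q' := hψmono i i' q hq q' hq' hqq
    have hzz : z < z' := by
      rw [← hzq, ← hzq'] at hψlt
      exact hρSM.lt_iff_lt.1 hψlt
    have hqR : q < R := Finset.mem_range.1 (hPosR i hq)
    have hqR' : q' < R := Finset.mem_range.1 (hPosR i' hq')
    have hmul : (z+1) * (R+1) ≤ z' * (R+1) := Nat.mul_le_mul_right _ hzz
    have hexp : (z+1) * (R+1) = z * (R+1) + (R+1) := by ring
    rw [← hzq, ← hzq']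
    simp only [hρ]
    omega
  obtain ⟨ξ, hξSM, hξval⟩ := interp Q ψ hinterp1 hinterp2
  set Φ : ℕ → ℕ := fun p => E (ξ p) with hΦdef
  have hΦSM : StrictMono Φ := hESM.comp hξSM
  have hΦM : ∀ p, p < R → Φ p ∈ M := fun p _ => hEM _
  have hwX : W (Yf Φ) ∈ (Hop n k l)^[j] X := (Wspec Φ hΦSM).1
  have hwEq' := hwEq Φ hΦSM hΦM
  have himg : ∀ i, (Pos i).image (fun p => g (Φ p)) = (v' i).image g' := by
    intro i
    have hximg : (Pos i).image ξ = tgt i := by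
      apply Finset.eq_of_subset_of_card_le
      · intro b hb
        obtain ⟨q, hq, rfl⟩ := Finset.mem_image.1 hb
        rw [hξval q (hQmem q ⟨i, hq⟩)]
        exact hψmem i q hq
      · rw [htgtcard i, Finset.card_image_of_injective _ hξSM.injective]
    calc (Pos i).image (fun p => g (Φ p))
        = ((Pos i).image ξ).image (fun z => g (E z)) := by
          rw [Finset.image_image]; rfl
      _ = (tgt i).image (fun z => g (E z)) := by rw [hximg]
      _ = ((v' i).image ρ).image (fun z => g (E z)) := by rw [htgt]
      _ = (v' i).image g' := by rw [Finset.image_image]; rfl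
  have hgoal : (fun i => T i ∪ (v' i).image g') = W (Yf Φ) := by
    funext i
    rw [hwEq']
    rw [← himg i]
  rw [hgoal]
  exact hwX


private lemma descent [DecidableEq α] {n : ℕ} {k l : Fin n → ℕ} (hkl : ∀ i, k i ≤ l i)
    {X : Set (Fin n → Finset α)} (hX : X ⊆ tuples n k) :
    ∀ (j : ℕ) (C : Fin n → Finset α) (c : Fin n → ℕ) (g : ℕ → α),
      Function.Injective g → (∀ t i, g t ∉ C i) → (∀ i, (C i).card + c i = k i) →
      PP n k l X j C c g → j ≤ ∑ i, (C i).card := by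
  intro j
  induction j with
  | zero => intro C c g _ _ _ _; exact Nat.zero_le _
  | succ j IH =>
    intro C c g hg hfresh hck hP
    obtain ⟨C', c', g', hg', hfresh', hck', hlt, hP'⟩ := step hkl hX hg hfresh hck hP
    have := IH C' c' g' hg' hfresh' hck' hP'
    omega

/-- Key Lemma: for infinite `α` and any
`X ⊆ [A]^{k₁} × ⋯ × [A]^{kₙ}`, the `(k₁ + ⋯ + kₙ + 1)`-fold iterate of
`H` applied to `X` is empty. -/
theorem stmt_11 [Infinite α] (n : ℕ) (hn : 1 ≤ n) (k l : Fin n → ℕ)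
    (hkl : ∀ i, k i ≤ l i) (X : Set (Fin n → Finset α))
    (hX : X ⊆ tuples n k) :
    (Hop n k l)^[(∑ i, k i) + 1] X = ∅ := by
  classical
  rw [Set.eq_empty_iff_forall_notMem]
  intro x hx
  have hxt : x ∈ tuples n k := iter_sub hX _ hx
  have hfin : (⋃ i, ((x i : Set α))).Finite :=
    Set.finite_iUnion (fun i => (x i).finite_toSet)
  have hinf : ((⋃ i, ((x i : Set α)))ᶜ : Set α).Infinite := hfin.infinite_compl
  set g0 := hinf.natEmbedding with hg0
  set g : ℕ → α := fun t => (g0 t : α) with hg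
  have hginj : Function.Injective g := by
    intro t t' htt
    exact g0.injective (Subtype.ext htt)
  have hgfresh : ∀ t i, g t ∉ x i := by
    intro t i hmem
    have h1 := (g0 t).2
    exact h1 (Set.mem_iUnion.2 ⟨i, hmem⟩)
  have hP : PP n k l X ((∑ i, k i) + 1) x (fun _ => 0) g := by
    intro v hvcard hvblk
    have hv : v = fun _ => (∅ : Finset ℕ) := by
      funext i
      exact Finset.card_eq_zero.1 (hvcard i)
    subst hv
    have : (fun i => x i ∪ (∅ : Finset ℕ).image g) = x := by
      funext i
      simp
    rw [this]
    exact hx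
  have hd := descent hkl hX ((∑ i, k i) + 1) x (fun _ => 0) g hginj hgfresh
    (fun i => by simp [hxt i]) hP
  have hsum : ∑ i, (x i).card = ∑ i, k i :=
    Finset.sum_congr rfl (fun i _ => hxt i)
  omega
end

section
/- (Multidimensional Ramsey) Let $n \ge 1$. There exists a function $R\colon \omega^n \times (\omega\setminus\{0\}) \times \omega \to \omega$ such that for all natural numbers $j_1,\dots,j_n, c > 0, r$ and all finite sets $S_1,\dots,S_n$ with $|S_i| \ge R(j_1,\dots,j_n,c,r)$ for each $i$, and every partition (covering) $[S_1]^{j_1}\times\cdots\times[S_n]^{j_n} = Y_1 \cup \cdots \cup Y_c$, there exist subsets $T_i \in [S_i]^r$ for each $i$ and some $d \le c$ with $[T_1]^{j_1}\times\cdots\times[T_n]^{j_n} \subseteq Y_d$. -/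
/-!
One dimension: pick points `a₁, a₂, …` of `S` greedily, each the minimum of what is left, and
shrink the rest to a set homogeneous for `x ↦ f (insert a x)`. On the `k * r` points chosen
(`k` the number of colors), the color of a `(j + 1)`-set depends only on its minimum, so by
pigeonhole `r` of them form a homogeneous set.

Products: induct on the number of coordinates. Fix `T₀ ⊆ S₀` of the one-dimensional size `N`,
color each tail tuple `w` by its whole row `u ↦ f (u, w)` over `[T₀]^{j₀}`, which takes at most
`k ^ (N choose j₀)` values, get homogeneous tails by induction, and finish with one-dimensional
Ramsey on `[T₀]^{j₀}` colored by the common row.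
-/

open Finset

def ramseyBound (k : ℕ) : ℕ → ℕ → ℕ
  | 0, r => r
  | j + 1, r => (fun m => ramseyBound k j m + 1)^[k * r] 0

section Ramsey

variable {α κ : Type*} [Fintype κ]

theorem exists_subset_color_eq_apply_min' [LinearOrder α] {j : ℕ}
    (hj : ∀ r (S : Finset α) (f : Finset α → κ), ramseyBound (Fintype.card κ) j r ≤ #S →
      ∃ T ⊆ S, #T = r ∧ ∃ d, ∀ x ⊆ T, #x = j → f x = d)
    (f : Finset α → κ) (m : ℕ) (S : Finset α)
    (hS : (fun m => ramseyBound (Fintype.card κ) j m + 1)^[m] 0 ≤ #S) :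
    ∃ A ⊆ S, #A = m ∧ ∃ g : α → κ,
      ∀ x ⊆ A, ∀ hx : x.Nonempty, #x = j + 1 → f x = g (x.min' hx) := by
  classical
  induction m generalizing S with
  | zero =>
    exact ⟨∅, empty_subset _, rfl, fun _ => f ∅, fun x hx hne _ =>
      absurd (subset_empty.mp hx) hne.ne_empty⟩
  | succ m ih =>
    rw [Function.iterate_succ_apply'] at hS
    have hSne : S.Nonempty := card_pos.mp (by omega)
    set a := S.min' hSne
    have haS : a ∈ S := S.min'_mem hSne
    obtain ⟨B, hBS, hB, d, hd⟩ := hj _ (S.erase a) (fun x => f (insert a x))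
      (by rw [card_erase_of_mem haS]; exact Nat.le_sub_one_of_lt hS)
    obtain ⟨A, hAB, hA, g, hg⟩ := ih B hB.ge
    have hAS : A ⊆ S.erase a := hAB.trans hBS
    have haA : a ∉ A := fun h => notMem_erase a S (hAS h)
    have haAS : insert a A ⊆ S := insert_subset haS (hAS.trans (erase_subset a S))
    refine ⟨insert a A, haAS, by rw [card_insert_of_notMem haA, hA], Function.update g a d, ?_⟩
    intro x hxA hx hxj
    by_cases hax : a ∈ x
    · have hmin : x.min' hx = a :=
        le_antisymm (min'_le x a hax) (le_min' _ _ _ fun b hb => S.min'_le b (haAS (hxA hb)))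
      have hxa : x.erase a ⊆ A := fun b hb =>
        (mem_insert.mp (hxA (mem_of_mem_erase hb))).resolve_left (ne_of_mem_erase hb)
      rw [hmin, Function.update_self, ← insert_erase hax]
      exact hd _ (hxa.trans hAB) (by rw [card_erase_of_mem hax, hxj]; rfl)
    · have hxA' : x ⊆ A := fun b hb =>
        (mem_insert.mp (hxA hb)).resolve_left (ne_of_mem_of_not_mem hb hax)
      rw [Function.update_of_ne (ne_of_mem_of_not_mem (x.min'_mem hx) hax)]
      exact hg x hxA' hx hxj

theorem exists_homogeneous_of_ramseyBound_le (j r : ℕ) (S : Finset α) (f : Finset α → κ)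
    (hS : ramseyBound (Fintype.card κ) j r ≤ #S) :
    ∃ T ⊆ S, #T = r ∧ ∃ d, ∀ x ⊆ T, #x = j → f x = d := by
  classical
  let _ : LinearOrder α := IsWellOrder.linearOrder WellOrderingRel
  induction j generalizing r S f with
  | zero =>
    obtain ⟨T, hTS, hT⟩ := exists_subset_card_eq hS
    exact ⟨T, hTS, hT, f ∅, fun x _ hx => by rw [card_eq_zero.mp hx]⟩
  | succ j ih =>
    obtain ⟨A, hAS, hA, g, hg⟩ := exists_subset_color_eq_apply_min' ih f _ S hS
    obtain ⟨d, -, hd⟩ := exists_le_card_fiber_of_mul_le_card_of_maps_to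
      (s := A) (t := univ) (n := r) (f := g) (fun _ _ => mem_univ _) ⟨f ∅, mem_univ _⟩
      (by rw [card_univ, hA])
    obtain ⟨T, hTA, hT⟩ := exists_subset_card_eq hd
    refine ⟨T, (hTA.trans (filter_subset _ _)).trans hAS, hT, d, fun x hxT hxj => ?_⟩
    have hx : x.Nonempty := card_pos.mp (by omega)
    rw [hg x (hxT.trans (hTA.trans (filter_subset _ _))) hx hxj]
    exact (mem_filter.mp (hTA (hxT (x.min'_mem hx)))).2

end Ramsey

universe u

def prodRamseyBound : (n : ℕ) → (Fin n → ℕ) → ℕ → ℕ → ℕ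
  | 0, _, _, _ => 0
  | n + 1, j, k, r =>
    max (ramseyBound k (j 0) r)
      (prodRamseyBound n (Fin.tail j) (k ^ (ramseyBound k (j 0) r).choose (j 0)) r)

theorem exists_prod_homogeneous_of_prodRamseyBound_le {α : Type u} {n : ℕ} {κ : Type u}
    [Fintype κ] (j : Fin n → ℕ) (r : ℕ) (S : Fin n → Finset α) (f : (Fin n → Finset α) → κ)
    (hS : ∀ i, prodRamseyBound n j (Fintype.card κ) r ≤ #(S i)) :
    ∃ T : Fin n → Finset α, (∀ i, T i ⊆ S i ∧ #(T i) = r) ∧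
      ∃ d, ∀ x : Fin n → Finset α, (∀ i, x i ⊆ T i ∧ #(x i) = j i) → f x = d := by
  classical
  induction n generalizing κ with
  | zero =>
    exact ⟨finZeroElim, finZeroElim, f finZeroElim, fun x _ => congrArg f (funext finZeroElim)⟩
  | succ n ih =>
    obtain ⟨T₀, hT₀S, hT₀⟩ := exists_subset_card_eq ((le_max_left _ _).trans (hS 0))
    set P := T₀.powersetCard (j 0)
    obtain ⟨T', hT'S, φ, hφ⟩ := ih (Fin.tail j) (Fin.tail S)
      (fun w (u : P) => f (Fin.cons u.1 w)) fun i => by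
        rw [Fintype.card_fun, Fintype.card_coe, card_powersetCard, hT₀]
        exact (le_max_right _ _).trans (hS i.succ)
    obtain ⟨T, hTT₀, hT, d, hd⟩ := exists_homogeneous_of_ramseyBound_le (j 0) r T₀
      (Function.extend Subtype.val φ fun _ => f fun _ => ∅) hT₀.ge
    refine ⟨Fin.cons T T', Fin.forall_fin_succ.mpr ⟨⟨hTT₀.trans hT₀S, hT⟩, hT'S⟩, d, ?_⟩
    intro x hx
    obtain ⟨⟨hx₀T, hx₀⟩, hx'⟩ := Fin.forall_fin_succ.mp hx
    have hx₀P : x 0 ∈ P := mem_powersetCard.mpr ⟨hx₀T.trans hTT₀, hx₀⟩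
    calc f x = f (Fin.cons (x 0) (Fin.tail x)) := by rw [Fin.cons_self_tail]
      _ = φ ⟨x 0, hx₀P⟩ := congrFun (hφ (Fin.tail x) hx') ⟨x 0, hx₀P⟩
      _ = Function.extend Subtype.val φ _ (x 0) := (Subtype.val_injective.extend_apply φ _ _).symm
      _ = d := hd _ hx₀T hx₀

theorem stmt_12_general (n : ℕ) :
    ∃ R : (Fin n → ℕ) → ℕ → ℕ → ℕ,
      ∀ (α : Type) (j : Fin n → ℕ) (c r : ℕ), 0 < c →
        ∀ S : Fin n → Finset α, (∀ i, R j c r ≤ (S i).card) →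
          ∀ Y : Fin c → Set (Fin n → Finset α),
            (∀ x : Fin n → Finset α,
              (∀ i, x i ⊆ S i ∧ (x i).card = j i) → ∃ d, x ∈ Y d) →
            ∃ T : Fin n → Finset α,
              (∀ i, T i ⊆ S i ∧ (T i).card = r) ∧
              ∃ d, ∀ x : Fin n → Finset α,
                (∀ i, x i ⊆ T i ∧ (x i).card = j i) → x ∈ Y d := by
  classical
  refine ⟨prodRamseyBound n, fun α j c r hc S hS Y hY => ?_⟩
  let F : (Fin n → Finset α) → Fin c := fun x => if h : ∃ d, x ∈ Y d then h.choose else ⟨0, hc⟩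
  obtain ⟨T, hTS, d, hd⟩ :=
    exists_prod_homogeneous_of_prodRamseyBound_le j r S F (by simpa using hS)
  refine ⟨T, hTS, d, fun x hx => ?_⟩
  have hxY : ∃ d, x ∈ Y d := hY x fun i => ⟨(hx i).1.trans (hTS i).1, (hx i).2⟩
  rw [← hd x hx, show F x = hxY.choose from dif_pos hxY]
  exact hxY.choose_spec

/-- Multidimensional (polarized) finite Ramsey theorem: for `n ≥ 1` there is
a Ramsey function `R` such that whenever `|Sᵢ| ≥ R(j, c, r)` and
`[S₁]^{j₁} × ⋯ × [Sₙ]^{jₙ}` is covered by `c` pieces `Y₁, …, Y_c`, there are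
`Tᵢ ∈ [Sᵢ]^r` with `[T₁]^{j₁} × ⋯ × [Tₙ]^{jₙ}` inside a single piece. -/
theorem stmt_12 (n : ℕ) (hn : 1 ≤ n) :
    ∃ R : (Fin n → ℕ) → ℕ → ℕ → ℕ,
      ∀ (α : Type) (j : Fin n → ℕ) (c r : ℕ), 0 < c →
        ∀ S : Fin n → Finset α, (∀ i, R j c r ≤ (S i).card) →
          ∀ Y : Fin c → Set (Fin n → Finset α),
            (∀ x : Fin n → Finset α,
              (∀ i, x i ⊆ S i ∧ (x i).card = j i) → ∃ d, x ∈ Y d) →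
            ∃ T : Fin n → Finset α,
              (∀ i, T i ⊆ S i ∧ (T i).card = r) ∧
              ∃ d, ∀ x : Fin n → Finset α,
                (∀ i, x i ⊆ T i ∧ (x i).card = j i) → x ∈ Y d :=
  stmt_12_general n
end

section
/- For every infinite set $A$ and every $n \ge 2$, there is an explicit non-injective surjection from $\mathrm{fin}(A)^n$ onto $[\mathrm{fin}(A)]^n$ (the set of $n$-element subsets of $\mathrm{fin}(A)$), constructed without the axiom of choice. -/
/-!
Send a tuple `g : Fin n → α` to its range when the range has exactly `n` elements, and to a fixed
`n`-element set otherwise. Every `n`-set is the range of an enumeration of it, so the map is onto;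
a constant tuple has a one-element range, so for `2 ≤ n` all constant tuples collapse to the fixed
set, and two distinct values of `α` give two constant tuples with the same image.
-/

open Finset Function

section RangeOrDefault

variable {α : Type*} [DecidableEq α] {n : ℕ}

theorem Finset.exists_image_univ_eq_of_card_eq {s : Finset α} (hs : s.card = n) :
    ∃ g : Fin n → α, univ.image g = s := by
  subst hs
  refine ⟨Subtype.val ∘ s.equivFin.symm, ?_⟩
  rw [← image_image, image_univ_equiv, univ_eq_attach, attach_image_val]

def rangeOrDefault (t : {s : Finset α // s.card = n}) (g : Fin n → α) :
    {s : Finset α // s.card = n} :=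
  if h : (univ.image g).card = n then ⟨univ.image g, h⟩ else t

theorem rangeOrDefault_surjective (t : {s : Finset α // s.card = n}) :
    Surjective (rangeOrDefault t) := by
  rintro ⟨s, hs⟩
  obtain ⟨g, hg⟩ := exists_image_univ_eq_of_card_eq hs
  exact ⟨g, by simp [rangeOrDefault, hg, hs]⟩

theorem rangeOrDefault_const (t : {s : Finset α // s.card = n}) (hn : 2 ≤ n) (a : α) :
    rangeOrDefault t (fun _ => a) = t := by
  have hne : (univ : Finset (Fin n)).Nonempty := univ_nonempty_iff.mpr ⟨⟨0, by omega⟩⟩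
  have hcard : (univ.image fun _ : Fin n => a).card ≠ n := by
    rw [image_const hne, card_singleton]
    omega
  simp [rangeOrDefault, hcard]

theorem not_injective_rangeOrDefault [Nontrivial α] (t : {s : Finset α // s.card = n})
    (hn : 2 ≤ n) : ¬ Injective (rangeOrDefault t) := by
  intro hinj
  obtain ⟨a, b, hab⟩ := exists_pair_ne α
  have hconst : (fun _ : Fin n => a) = fun _ => b :=
    hinj (by rw [rangeOrDefault_const t hn, rangeOrDefault_const t hn])
  exact hab (congrFun hconst ⟨0, by omega⟩)

end RangeOrDefault

/-- For every infinite set `A` and `n ≥ 2`, there is a non-injective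
surjection from `fin(A)ⁿ` onto `[fin(A)]ⁿ`. -/
theorem stmt_14 (A : Type) [Infinite A] (n : ℕ) (hn : 2 ≤ n) :
    ∃ f : (Fin n → Finset A) → {s : Finset (Finset A) // s.card = n},
      Function.Surjective f ∧ ¬ Function.Injective f := by
  classical
  obtain ⟨t, ht⟩ := Infinite.exists_subset_card_eq (Finset A) n
  exact ⟨rangeOrDefault ⟨t, ht⟩, rangeOrDefault_surjective _, not_injective_rangeOrDefault _ hn⟩
end

section
/- Let $X$ be a set equipped with a preorder $\sqsubseteq$ such that every $\sqsubseteq$-chain without repetition has length less than some fixed $l \in \omega$. Suppose $f\colon X \to X$ is a surjection such that $f(u) \sqsubseteq u$ for all $u \in X$. Then for every $t \in X$ there is $m > 0$ with $f^{(m)}(t) = t$; consequently $f$ is injective (i.e., $X$ is dually Dedekind finite with respect to such $f$). -/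
/-!
The forward orbit `s, f s, f² s, …` of any point is a descending chain, so it repeats within its
first `l` terms: `f^[i] s = f^[j] s` with `i < j < l`. Hence `f^[l] s` is periodic. Since `f` is
surjective, so is `f^[l]`, and every point is of the form `f^[l] s`, hence periodic. A map all of
whose points are periodic is injective.
-/

namespace Function

variable {α : Type*} {f : α → α}

theorem isPeriodicPt_iterate_of_iterate_eq {s : α} {i j n : ℕ} (hij : i < j) (hin : i ≤ n)
    (heq : f^[i] s = f^[j] s) : IsPeriodicPt f (j - i) (f^[n] s) := by
  have hperiodic : IsPeriodicPt f (j - i) (f^[i] s) := by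
    rw [IsPeriodicPt, IsFixedPt, ← iterate_add_apply, Nat.sub_add_cancel hij.le, heq]
  simpa only [← iterate_add_apply, Nat.sub_add_cancel hin] using hperiodic.apply_iterate (n - i)

theorem Surjective.exists_isPeriodicPt_of_iterate_eq (hf : Surjective f) (n : ℕ)
    (hrepeat : ∀ s, ∃ i j, i < j ∧ i ≤ n ∧ f^[i] s = f^[j] s) (t : α) :
    ∃ m > 0, IsPeriodicPt f m t := by
  obtain ⟨s, rfl⟩ := hf.iterate n t
  obtain ⟨i, j, hij, hin, heq⟩ := hrepeat s
  exact ⟨j - i, Nat.sub_pos_of_lt hij, isPeriodicPt_iterate_of_iterate_eq hij hin heq⟩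

theorem injective_of_forall_exists_isPeriodicPt (hf : ∀ x, ∃ m > 0, IsPeriodicPt f m x) :
    Injective f := fun x y hxy ↦ by
  obtain ⟨m, hm, hx⟩ := hf x
  obtain ⟨n, hn, hy⟩ := hf y
  exact hx.eq_of_apply_eq hy hm hn hxy

end Function

theorem stmt_16_general (X : Type) (r : X → X → Prop)
    (l : ℕ)
    (hchain : ∀ h : ℕ → X, (∀ i, r (h (i + 1)) (h i)) →
      ∃ i j, i < j ∧ j < l ∧ h i = h j)
    (f : X → X) (hsurj : Function.Surjective f) (hdec : ∀ u, r (f u) u) :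
    (∀ t : X, ∃ m > 0, f^[m] t = t) ∧ Function.Injective f := by
  have horbit_repeats : ∀ s, ∃ i j, i < j ∧ i ≤ l ∧ f^[i] s = f^[j] s := fun s ↦ by
    obtain ⟨i, j, hij, hjl, heq⟩ := hchain (f^[·] s) fun k ↦ by
      simpa only [Function.iterate_succ_apply'] using hdec (f^[k] s)
    exact ⟨i, j, hij, (hij.trans hjl).le, heq⟩
  have hperiodic := hsurj.exists_isPeriodicPt_of_iterate_eq l horbit_repeats
  exact ⟨hperiodic, Function.injective_of_forall_exists_isPeriodicPt hperiodic⟩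

/-- If `X` carries a preorder `r` in which every repetition-free descending
chain has length less than `l`, and `f : X → X` is a surjection with
`r (f u) u` for all `u`, then every point is periodic under `f` and `f` is
injective. -/
theorem stmt_16 (X : Type) (r : X → X → Prop)
    (hrefl : ∀ x, r x x) (htrans : ∀ x y z, r x y → r y z → r x z)
    (l : ℕ)
    (hchain : ∀ h : ℕ → X, (∀ i, r (h (i + 1)) (h i)) →
      ∃ i j, i < j ∧ j < l ∧ h i = h j)
    (f : X → X) (hsurj : Function.Surjective f) (hdec : ∀ u, r (f u) u) :
    (∀ t : X, ∃ m > 0, f^[m] t = t) ∧ Function.Injective f :=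
  stmt_16_general X r l hchain f hsurj hdec
end

section
/- Let $A$ be a set, $B \subseteq A$ finite with $|B| = b$, and $n \in \omega$. For $t \in \mathrm{fin}(A)^n$, define the equivalence relation $\sim_t$ on $A \setminus B$ by $a \sim_t a'$ iff for all $k < n$, $a \in t(k) \leftrightarrow a' \in t(k)$. Then for every fixed $u \in \mathrm{fin}(A)^n$, the set $\{t \in \mathrm{fin}(A)^n \mid {\sim_t} = {\sim_u}\}$ has cardinality at most $2^{(b + 2^n)\cdot n}$. -/
/-!
Off `B`, the membership pattern `a ↦ (a ∈ t k)ₖ` of `t` is constant on the classes of `∼ₜ`; when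
`∼ₜ = ∼ᵤ` it therefore factors through the pattern of `u` by a map `(ι → Prop) → (ι → Prop)`.
So `t` is determined by that map, one of `(2ⁿ)^(2ⁿ)`, together with its pattern on `B`, one of
`2^(|B|·n)`.
-/

open Function

variable {A ι : Type*}

def memPattern (t : ι → Finset A) (a : A) : ι → Prop := fun k => a ∈ t k

lemma memPattern_eq_memPattern_iff {t : ι → Finset A} {a a' : A} :
    memPattern t a = memPattern t a' ↔ ∀ k, a ∈ t k ↔ a' ∈ t k := by
  simp [memPattern, funext_iff]

/-- The tuples `t` with `∼ᵤ ⊆ ∼ₜ` on `A \ B`. -/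
def patternFactorsThrough (B : Finset A) (u : ι → Finset A) : Set (ι → Finset A) :=
  {t | FactorsThrough (fun a : {a // a ∉ B} => memPattern t a) (fun a => memPattern u a)}

noncomputable def patternCode (B : Finset A) (u t : ι → Finset A) :
    (B → ι → Prop) × ((ι → Prop) → ι → Prop) :=
  (fun b => memPattern t b,
    extend (fun a : {a // a ∉ B} => memPattern u a) (fun a => memPattern t a) fun _ _ => False)

lemma patternCode_injOn (B : Finset A) (u : ι → Finset A) :
    Set.InjOn (patternCode B u) (patternFactorsThrough B u) := by
  intro t ht t' ht' h
  ext k a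
  by_cases ha : a ∈ B
  · exact iff_of_eq (congrFun (congrFun (congrArg Prod.fst h) ⟨a, ha⟩) k)
  · have h_snd := congrFun (congrArg Prod.snd h) (memPattern u a)
    dsimp only [patternCode] at h_snd
    rw [ht.extend_apply _ ⟨a, ha⟩, ht'.extend_apply _ ⟨a, ha⟩] at h_snd
    exact iff_of_eq (congrFun h_snd k)

lemma card_patternCode [Finite ι] (B : Finset A) :
    Nat.card ((B → ι → Prop) × ((ι → Prop) → ι → Prop)) =
      2 ^ ((B.card + 2 ^ Nat.card ι) * Nat.card ι) := by
  simp only [Nat.card_prod, Nat.card_fun, Nat.card_eq_fintype_card, Fintype.card_prop,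
    Fintype.card_coe]
  ring

lemma patternFactorsThrough_finite [Finite ι] (B : Finset A) (u : ι → Finset A) :
    (patternFactorsThrough B u).Finite :=
  Set.Finite.of_injOn (Set.mapsTo_univ _ _) (patternCode_injOn B u) Set.finite_univ

lemma patternFactorsThrough_ncard_le [Finite ι] (B : Finset A) (u : ι → Finset A) :
    (patternFactorsThrough B u).ncard ≤ 2 ^ ((B.card + 2 ^ Nat.card ι) * Nat.card ι) :=
  calc _ ≤ (Set.univ : Set ((B → ι → Prop) × ((ι → Prop) → ι → Prop))).ncard :=
        Set.ncard_le_ncard_of_injOn _ (fun _ _ => trivial) (patternCode_injOn B u)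
    _ = _ := by rw [Set.ncard_univ, card_patternCode]

/-- For `t : fin(A)ⁿ`, the equivalence `∼ₜ` on `A \ B` relates `a, a'` iff
they lie in the same coordinates of `t`. For fixed `u`, the set of `t` with
`∼ₜ = ∼ᵤ` has at most `2^((|B| + 2ⁿ)·n)` elements. -/
theorem stmt_17 (A : Type) (B : Finset A) (n : ℕ) (u : Fin n → Finset A) :
    ({t : Fin n → Finset A |
        ∀ a a', a ∉ B → a' ∉ B →
          ((∀ k, a ∈ t k ↔ a' ∈ t k) ↔ (∀ k, a ∈ u k ↔ a' ∈ u k))} :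
      Set (Fin n → Finset A)).Finite ∧
    ({t : Fin n → Finset A |
        ∀ a a', a ∉ B → a' ∉ B →
          ((∀ k, a ∈ t k ↔ a' ∈ t k) ↔ (∀ k, a ∈ u k ↔ a' ∈ u k))} :
      Set (Fin n → Finset A)).ncard ≤ 2 ^ ((B.card + 2 ^ n) * n) := by
  have h_sub : {t : Fin n → Finset A | ∀ a a', a ∉ B → a' ∉ B →
        ((∀ k, a ∈ t k ↔ a' ∈ t k) ↔ (∀ k, a ∈ u k ↔ a' ∈ u k))} ⊆
      patternFactorsThrough B u :=
    fun t ht a a' h => memPattern_eq_memPattern_iff.2 <|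
      (ht a a' a.2 a'.2).2 (memPattern_eq_memPattern_iff.1 h)
  have h_fin := patternFactorsThrough_finite B u
  have h_card := patternFactorsThrough_ncard_le B u
  rw [Nat.card_fin] at h_card
  exact ⟨h_fin.subset h_sub, (Set.ncard_le_ncard h_sub h_fin).trans h_card⟩
end

section
/- Let $A$ be a set, $B \subseteq A$ finite, $n \in \omega$, and define $\sim_t$ on $A\setminus B$ as above for $t \in \mathrm{fin}(A)^n$. Define the preorder $t \sqsubseteq u$ iff ${\sim_u} \subseteq {\sim_t}$. Then every $\sqsubseteq$-chain in $\mathrm{fin}(A)^n$ without repetition has length at most $2^{(|B| + 2^n + 1)\cdot n}$. -/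
/-!
Along the chain the relations `∼_{h i}` only grow, so every `∼_{h i}` is coarser than `∼_{h 0}`.
Hence `h i` is determined by its restriction to `B` together with a map from the at most `2ⁿ`
classes of `∼_{h 0}` to membership patterns `Finset (Fin n)`. Encoding an element of `A` by
itself if it lies in `B` and by its `h 0`-pattern otherwise, the tuples of the chain are
injectively coded by maps `B ⊕ Finset (Fin n) → Finset (Fin n)`, of which there are
`(2ⁿ)^(|B| + 2ⁿ) ≤ 2^((|B| + 2ⁿ + 1)·n)`.
-/

open Finset Function

theorem Fintype.card_le_pow_of_factorsThrough {ι α β γ : Type*} [Fintype ι] [Fintype β]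
    [Fintype γ] [Nonempty β] {f : ι → α → β} (hf : Injective f) (g : α → γ)
    (hfg : ∀ i, (f i).FactorsThrough g) : card ι ≤ card β ^ card γ := by
  classical
  let F : ι → γ → β := fun i => extend g (f i) fun _ => Classical.arbitrary β
  have hF : Injective F := fun i j hij =>
    hf <| funext fun a => by
      rw [← (hfg i).extend_apply, ← (hfg j).extend_apply]
      exact congrFun hij (g a)
  simpa only [Fintype.card_fun] using Fintype.card_le_of_injective F hF

namespace CoordinateChain

variable {A : Type*} {n : ℕ}

/-- The paper's `∼ₜ`, as a relation on all of `A` that fails whenever an argument lies in `B`. -/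
def Sim (B : Finset A) (t : Fin n → Finset A) (a a' : A) : Prop :=
  a ∉ B ∧ a' ∉ B ∧ ∀ k, a ∈ t k ↔ a' ∈ t k

lemma sim_le_of_chain {L : ℕ} (B : Finset A) (h : Fin L → Fin n → Finset A)
    (hchain : ∀ (i : Fin L) (hi : i.val + 1 < L), Sim B (h i) ≤ Sim B (h ⟨i.val + 1, hi⟩))
    {i j : Fin L} (hij : i ≤ j) : Sim B (h i) ≤ Sim B (h j) := by
  obtain _ | m := L
  · exact i.elim0
  · refine (Fin.monotone_iff_le_succ (f := fun k => Sim B (h k))).2 (fun k => ?_) hij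
    exact hchain k.castSucc (by simp)

variable [DecidableEq A]

def memPattern (t : Fin n → Finset A) (a : A) : Finset (Fin n) := {k | a ∈ t k}

lemma mem_memPattern {t : Fin n → Finset A} {a : A} {k : Fin n} :
    k ∈ memPattern t a ↔ a ∈ t k := by
  simp [memPattern]

lemma memPattern_injective : Injective (memPattern : (Fin n → Finset A) → A → Finset (Fin n)) :=
  fun t u htu => funext fun k => Finset.ext fun a => by
    rw [← mem_memPattern, ← mem_memPattern, htu]

lemma sim_iff {B : Finset A} {t : Fin n → Finset A} {a a' : A} :
    Sim B t a a' ↔ a ∉ B ∧ a' ∉ B ∧ memPattern t a = memPattern t a' := by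
  simp only [Sim, Finset.ext_iff, mem_memPattern]

def classKey (B : Finset A) (t : Fin n → Finset A) (a : A) : B ⊕ Finset (Fin n) :=
  if ha : a ∈ B then .inl ⟨a, ha⟩ else .inr (memPattern t a)

lemma factorsThrough_classKey {B : Finset A} {t u : Fin n → Finset A}
    (htu : Sim B t ≤ Sim B u) : (memPattern u).FactorsThrough (classKey B t) := by
  intro a a' hkey
  by_cases ha : a ∈ B <;> by_cases ha' : a' ∈ B <;>
    simp only [classKey, ha, ha', dite_true, dite_false, Sum.inl.injEq, Subtype.mk.injEq,
      Sum.inr.injEq, reduceCtorEq] at hkey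
  · rw [hkey]
  · exact (sim_iff.1 (htu a a' (sim_iff.2 ⟨ha, ha', hkey⟩))).2.2

end CoordinateChain

open CoordinateChain in
/-- With `t ⊑ u` iff `∼ᵤ ⊆ ∼ₜ` (where `∼ₜ` relates `a, a' ∉ B` iff they lie
in the same coordinates of `t`), every ⊑-chain in `fin(A)ⁿ` without
repetition has length at most `2^((|B| + 2ⁿ + 1)·n)`. -/
theorem stmt_18 (A : Type) (B : Finset A) (n : ℕ) (L : ℕ)
    (h : Fin L → (Fin n → Finset A)) (hinj : Function.Injective h)
    (hchain : ∀ (i : Fin L) (hi : i.val + 1 < L),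
      ∀ a a', a ∉ B → a' ∉ B →
        (∀ k, a ∈ h i k ↔ a' ∈ h i k) →
        (∀ k, a ∈ h ⟨i.val + 1, hi⟩ k ↔ a' ∈ h ⟨i.val + 1, hi⟩ k)) :
    L ≤ 2 ^ ((B.card + 2 ^ n + 1) * n) := by
  classical
  obtain _ | m := L
  · exact Nat.zero_le _
  have hsim (i : Fin (m + 1)) : Sim B (h 0) ≤ Sim B (h i) :=
    sim_le_of_chain B h (fun i hi a a' ⟨ha, ha', hs⟩ => ⟨ha, ha', hchain i hi a a' ha ha' hs⟩)
      (Fin.zero_le i)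
  have hcard := Fintype.card_le_pow_of_factorsThrough
    (memPattern_injective.comp hinj) (classKey B (h 0)) fun i => factorsThrough_classKey (hsim i)
  calc m + 1 ≤ (2 ^ n) ^ (B.card + 2 ^ n) := by simpa using hcard
    _ = 2 ^ (n * (B.card + 2 ^ n)) := (pow_mul 2 n _).symm
    _ ≤ 2 ^ ((B.card + 2 ^ n + 1) * n) := Nat.pow_le_pow_right two_pos (by nlinarith)
end
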